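/- arXiv:0812.1088 — 3 statements merged into one kernel-verified Lean document; each statement's English description precedes it below -/
import Mathlib

section
/- Let B=(V,E) be a Bratteli diagram with incidence matrices F_n and suppose the tail equivalence relation R on X_B is aperiodic. Define the cones C_n^∞ := ∩_{m ≥ n} F_n^T F_{n+1}^T ⋯ F_m^T (ℝ_+^{|V_{m+1}|}). (1) If μ is a finite Borel R-invariant measure on X_B, then the vectors p^{(n)} = (μ([ē_w]))_{w ∈ V_n}, where ē_w is any finite path from v_0 to w, satisfy p^{(n)} ∈ C_n^∞ and F_n^T p^{(n+1)} = p^{(n)} for all n ≥ 1. (2) Conversely, if a sequence of vectors p^{(n)} ∈ ℝ_+^{|V_n|} satisfies F_n^T p^{(n+1)} = p^{(n)} for all n ≥ 1, then there exists a non-atomic finite Borel R-invariant measure μ on X_B with μ([ē]) = p_w^{(n)} for every finite path ē from v_0 to w ∈ V_n. (3) Such a measure μ is a probability measure if and only if Σ_{w∈V_1} h_w^{(1)} p_w^{(1)} = 1, in which case Σ_{w∈V_n} h_w^{(n)} p_w^{(n)} = 1 for all n ≥ 1. -/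
open MeasureTheory

/-- A Bratteli diagram `B = (V, E)`.  `V n` is the (finite, nonempty) set of vertices at
level `n`, with `V 0` a single point, and `E n` is the (finite, nonempty) set of edges
connecting level `n` to level `n + 1` (it corresponds to the edge set `E_{n+1}` of the
diagram).  Every vertex has an outgoing edge (`src_surj`) and every vertex of positive
level has an incoming edge (`rng_surj`). -/
structure BratteliDiagram where
  V : ℕ → Type
  E : ℕ → Type
  fintypeV : ∀ n, Fintype (V n)
  fintypeE : ∀ n, Fintype (E n)
  uniqueV0 : Unique (V 0)
  src : ∀ n, E n → V n
  rng : ∀ n, E n → V (n + 1)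
  src_surj : ∀ n, Function.Surjective (src n)
  rng_surj : ∀ n, Function.Surjective (rng n)

namespace BratteliDiagram

variable (B : BratteliDiagram)

instance (n : ℕ) : Fintype (B.V n) := B.fintypeV n
instance (n : ℕ) : Fintype (B.E n) := B.fintypeE n
instance (n : ℕ) : TopologicalSpace (B.E n) := ⊥
instance (n : ℕ) : DiscreteTopology (B.E n) := ⟨rfl⟩

/-- The path space `X_B` of the diagram: infinite sequences of edges, one at each level,
with matching range and source. -/
def Path : Type :=
  { x : ∀ n, B.E n // ∀ n, B.rng n (x n) = B.src (n + 1) (x (n + 1)) }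

instance : TopologicalSpace B.Path :=
  inferInstanceAs (TopologicalSpace
    { x : ∀ n, B.E n // ∀ n, B.rng n (x n) = B.src (n + 1) (x (n + 1)) })

noncomputable instance : MeasurableSpace B.Path := borel B.Path

instance : BorelSpace B.Path := ⟨rfl⟩

/-- The vertex at level `n` through which a path passes: the source of its `n`-th edge
(for `n = 0` this is the top vertex `v₀`). -/
def vertexAt (x : B.Path) (n : ℕ) : B.V n := B.src n (x.1 n)

/-- The cylinder set of all paths agreeing with `x` on the first `n` edges; this is the
clopen set determined by the finite initial path `(x_0, …, x_{n-1})`, which ends at the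
vertex `B.vertexAt x n`. -/
def cylinder (x : B.Path) (n : ℕ) : Set B.Path :=
  { y | ∀ k, k < n → y.1 k = x.1 k }

/-- The tail (cofinal) equivalence relation `R` on the path space. -/
def TailEquiv (x y : B.Path) : Prop := ∃ N, ∀ n, N ≤ n → x.1 n = y.1 n

/-- The tail equivalence relation is aperiodic: every equivalence class is infinite. -/
def Aperiodic : Prop := ∀ x : B.Path, { y | B.TailEquiv x y }.Infinite

/-- A (Borel) measure on the path space is `R`-invariant iff any two cylinder sets given
by finite initial paths ending at the same vertex have equal measure. -/
def IsRInvariant (μ : Measure B.Path) : Prop :=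
  ∀ (x y : B.Path) (n : ℕ), B.vertexAt x n = B.vertexAt y n →
    μ (B.cylinder x n) = μ (B.cylinder y n)

/-- The `n`-th incidence matrix: `incidence n v w` is the number of edges from the vertex
`w` at level `n` to the vertex `v` at level `n+1`. -/
noncomputable def incidence (n : ℕ) : Matrix (B.V (n + 1)) (B.V n) ℕ :=
  fun v w => Nat.card { e : B.E n // B.src n e = w ∧ B.rng n e = v }

/-- The height `h^{(n)}_w`: the number of finite paths from the top vertex to the vertex
`w` at level `n`. -/
noncomputable def height : (n : ℕ) → B.V n → ℕ
  | 0, _ => 1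
  | (n + 1), v => ∑ w : B.V n, B.incidence n v w * height n w

/-- The transpose `F_n^T` of the `n`-th incidence matrix applied (over `ℝ`) to a vector
indexed by the vertices of level `n + 1`. -/
noncomputable def transAction (n : ℕ) (p : B.V (n + 1) → ℝ) : B.V n → ℝ :=
  fun w => ∑ v : B.V (n + 1), (B.incidence n v w : ℝ) * p v

/-- The composition `F_n^T F_{n+1}^T ⋯ F_{n+k-1}^T` applied to a vector at level `n + k`. -/
noncomputable def push (n : ℕ) : (k : ℕ) → (B.V (n + k) → ℝ) → (B.V n → ℝ)
  | 0, q => q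
  | (k + 1), q => push n k (B.transAction (n + k) q)

/-- The cone `C_n^∞ = ⋂_{m ≥ n} F_n^T F_{n+1}^T ⋯ F_m^T (ℝ_+^{|V_{m+1}|})`. -/
def coneInf (n : ℕ) : Set (B.V n → ℝ) :=
  { q | ∀ k, 1 ≤ k → ∃ r : B.V (n + k) → ℝ, (∀ v, 0 ≤ r v) ∧ B.push n k r = q }

/-- The diagram is stationary: all the levels `(V_n, E_n)`, `n ≥ 1`, are identical. -/
def IsStationary : Prop :=
  ∃ (eV : ∀ n, B.V (n + 1) ≃ B.V (n + 2)) (eE : ∀ n, B.E (n + 1) ≃ B.E (n + 2)),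
    (∀ n e, B.src (n + 2) (eE n e) = eV n (B.src (n + 1) e)) ∧
    (∀ n e, B.rng (n + 2) (eE n e) = eV (n + 1) (B.rng (n + 1) e))

end BratteliDiagram

/-- An ordering `ω` on a Bratteli diagram: a linear order on each set `r⁻¹(v)` of edges
with a common range. -/
structure BOrder (B : BratteliDiagram) where
  le : ∀ n, B.E n → B.E n → Prop
  le_refl : ∀ n e, le n e e
  le_trans : ∀ n e f g, le n e f → le n f g → le n e g
  le_antisymm : ∀ n e f, le n e f → le n f e → e = f
  le_total : ∀ n e f, B.rng n e = B.rng n f → le n e f ∨ le n f e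

namespace BOrder

variable {B : BratteliDiagram} (ω : BOrder B)

/-- An edge is maximal if it is the largest element of `r⁻¹(r(e))`. -/
def maxEdge (n : ℕ) (e : B.E n) : Prop := ∀ f, B.rng n f = B.rng n e → ω.le n f e

/-- An edge is minimal if it is the smallest element of `r⁻¹(r(e))`. -/
def minEdge (n : ℕ) (e : B.E n) : Prop := ∀ f, B.rng n f = B.rng n e → ω.le n e f

/-- A maximal infinite path: all its edges are maximal. -/
def IsMaxPath (x : B.Path) : Prop := ∀ n, ω.maxEdge n (x.1 n)

/-- A minimal infinite path: all its edges are minimal. -/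
def IsMinPath (x : B.Path) : Prop := ∀ n, ω.minEdge n (x.1 n)

/-- `f` is the successor of `e` in the linearly ordered set `r⁻¹(r(e))`. -/
def isSucc (n : ℕ) (e f : B.E n) : Prop :=
  B.rng n f = B.rng n e ∧ ω.le n e f ∧ e ≠ f ∧
    ∀ g, B.rng n g = B.rng n e → ω.le n e g → g ≠ e → ω.le n f g

/-- The defining property of a Vershik map on the non-maximal paths: if `k` is the least
level at which the edge of `x` is not maximal, then `φ x` replaces that edge by its
successor, is minimal below level `k`, and agrees with `x` above level `k`. -/
def VershikSucc (φ : B.Path → B.Path) : Prop :=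
  ∀ (x : B.Path) (k : ℕ), ¬ ω.maxEdge k (x.1 k) → (∀ j, j < k → ω.maxEdge j (x.1 j)) →
    ω.isSucc k (x.1 k) ((φ x).1 k) ∧ (∀ j, j < k → ω.minEdge j ((φ x).1 j)) ∧
      ∀ j, k < j → (φ x).1 j = x.1 j

/-- `φ` is a Vershik map for the order `ω`: it maps the set of maximal paths onto the set
of minimal paths and sends every non-maximal path to its successor. -/
def IsVershikMap (φ : B.Path → B.Path) : Prop :=
  (φ '' { x | ω.IsMaxPath x } = { x | ω.IsMinPath x }) ∧ ω.VershikSucc φ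

end BOrder


/-!
The numbers `p n w = μ [ē_w]` of an invariant measure satisfy `F_nᵀ p⁽ⁿ⁺¹⁾ = p⁽ⁿ⁾`: split a
cylinder according to its next edge. Iterating this puts `p⁽ⁿ⁾` in every cone
`F_nᵀ ⋯ F_mᵀ ℝ₊`, and since `h⁽ⁿ⁺¹⁾ = F_n h⁽ⁿ⁾` the total mass `∑_w h⁽ⁿ⁾_w p⁽ⁿ⁾_w = μ(X_B)` does not
depend on `n`.

Conversely, put `p⁽⁰⁾ = F₀ᵀ p⁽¹⁾` and cut `[0, p⁽⁰⁾)` recursively: the interval of a cylinder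
ending at `v` has length `p⁽ⁿ⁾_v` and is divided into consecutive subintervals, one for each edge
`e` leaving `v`, of lengths `p⁽ⁿ⁺¹⁾_{r(e)}`; the relation `F_nᵀ p⁽ⁿ⁺¹⁾ = p⁽ⁿ⁾` says exactly that
they fill it. Following the nested intervals that contain `t` defines a measurable map
`[0, p⁽⁰⁾) → X_B`, and the image of Lebesgue measure gives each cylinder the measure `p⁽ⁿ⁾_v`.

Tail-equivalent points carry the same mass under any finite invariant measure, as their cylinders
eventually have equal measure; an aperiodic class holds infinitely many such points, so the
measure has no atoms.
-/

open MeasureTheory Finset Filter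
open scoped Topology

section IntervalPartition

variable {α β : Type*} [LinearOrder β] (s : Finset α) (g : α → ℝ) (idx : α → β)

/-- Left endpoint of the interval of `a` when `[0, ∑ b ∈ s, g b)` is cut into consecutive
intervals of lengths `g b`, listed by increasing `idx b`. -/
noncomputable def intervalOffset (a : α) : ℝ := ∑ b ∈ s with idx b < idx a, g b

variable {s g idx}

lemma intervalOffset_nonneg (hg : ∀ b ∈ s, 0 ≤ g b) (a : α) : 0 ≤ intervalOffset s g idx a :=
  sum_nonneg fun b hb => hg b (mem_filter.1 hb).1

lemma intervalOffset_add_le_sum_filter (hg : ∀ b ∈ s, 0 ≤ g b) {a : α} (ha : a ∈ s)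
    {P : α → Prop} [DecidablePred P] (hPa : P a) (hP : ∀ b ∈ s, idx b < idx a → P b) :
    intervalOffset s g idx a + g a ≤ ∑ b ∈ s with P b, g b := by
  classical
  have ha' : a ∉ s.filter (idx · < idx a) := by simp
  rw [intervalOffset, add_comm, ← sum_insert ha']
  refine sum_le_sum_of_subset_of_nonneg ?_ fun b hb _ => hg b (mem_filter.1 hb).1
  intro b hb
  rcases mem_insert.1 hb with rfl | hb
  · exact mem_filter.2 ⟨ha, hPa⟩
  · obtain ⟨hbs, hlt⟩ := mem_filter.1 hb
    exact mem_filter.2 ⟨hbs, hP b hbs hlt⟩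

lemma intervalOffset_add_le_sum (hg : ∀ b ∈ s, 0 ≤ g b) {a : α} (ha : a ∈ s) :
    intervalOffset s g idx a + g a ≤ ∑ b ∈ s, g b := by
  simpa using intervalOffset_add_le_sum_filter (P := fun _ => True) hg ha trivial (by simp)

lemma intervalOffset_add_le_of_lt (hg : ∀ b ∈ s, 0 ≤ g b) {a c : α} (ha : a ∈ s)
    (hac : idx a < idx c) : intervalOffset s g idx a + g a ≤ intervalOffset s g idx c :=
  intervalOffset_add_le_sum_filter hg ha hac fun _ _ hb => hb.trans hac

lemma eq_of_mem_Ico_intervalOffset (hg : ∀ b ∈ s, 0 ≤ g b) (hidx : Set.InjOn idx s)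
    {a c : α} (ha : a ∈ s) (hc : c ∈ s) {t : ℝ}
    (hta : t ∈ Set.Ico (intervalOffset s g idx a) (intervalOffset s g idx a + g a))
    (htc : t ∈ Set.Ico (intervalOffset s g idx c) (intervalOffset s g idx c + g c)) :
    a = c := by
  rcases lt_trichotomy (idx a) (idx c) with h | h | h
  · linarith [intervalOffset_add_le_of_lt hg ha h, hta.2, htc.1]
  · exact hidx ha hc h
  · linarith [intervalOffset_add_le_of_lt hg hc h, hta.1, htc.2]

lemma exists_mem_Ico_intervalOffset (hidx : Set.InjOn idx s) {t : ℝ} (ht0 : 0 ≤ t)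
    (ht : t < ∑ b ∈ s, g b) :
    ∃ a ∈ s, t ∈ Set.Ico (intervalOffset s g idx a) (intervalOffset s g idx a + g a) := by
  classical
  induction s using Finset.induction_on_max_value idx with
  | empty => simp at ht; linarith
  | insert a s has hmax ih =>
    have hlt : ∀ b ∈ s, idx b < idx a := fun b hb =>
      (hmax b hb).lt_of_ne fun h => has (hidx (mem_insert_of_mem hb) (mem_insert_self a s) h ▸ hb)
    have hoff : ∀ b ∈ s, intervalOffset (insert a s) g idx b = intervalOffset s g idx b := by
      intro b hb
      rw [intervalOffset, intervalOffset, filter_insert, if_neg (hlt b hb).not_gt]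
    by_cases hts : t < ∑ b ∈ s, g b
    · obtain ⟨b, hb, htb⟩ := ih (hidx.mono (by simp)) hts
      exact ⟨b, mem_insert_of_mem hb, by rwa [hoff b hb]⟩
    · have hoffa : intervalOffset (insert a s) g idx a = ∑ b ∈ s, g b := by
        rw [intervalOffset, filter_insert, if_neg (lt_irrefl _), filter_true_of_mem hlt]
      rw [sum_insert has] at ht
      exact ⟨a, mem_insert_self a s, by rw [hoffa]; constructor <;> linarith⟩

end IntervalPartition

lemma Set.Infinite.eq_zero_of_measure_singleton_eq {α : Type*} [MeasurableSpace α]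
    [MeasurableSingletonClass α] {μ : Measure α} [IsFiniteMeasure μ] {s : Set α}
    (hs : s.Infinite) {c : ENNReal} (h : ∀ y ∈ s, μ {y} = c) : c = 0 := by
  by_contra hc
  set f := hs.natEmbedding
  have hdisj : Pairwise (Function.onFun Disjoint fun i => ({(f i : α)} : Set α)) :=
    fun i j hij => Set.disjoint_singleton.2 fun h => hij (f.injective (Subtype.ext h))
  have hsum := measure_iUnion (μ := μ) hdisj fun _ => measurableSet_singleton _
  simp_rw [h _ (f _).2, ENNReal.tsum_const_eq_top_of_ne_zero hc] at hsum
  exact measure_ne_top μ _ hsum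

namespace BratteliDiagram

open scoped Classical

variable {B : BratteliDiagram}

lemma transAction_apply_eq_sum_edges (n : ℕ) (r : B.V (n + 1) → ℝ) (w : B.V n) :
    B.transAction n r w = ∑ e with B.src n e = w, r (B.rng n e) := by
  rw [transAction, ← sum_fiberwise (univ.filter fun e => B.src n e = w) (B.rng n)]
  refine sum_congr rfl fun v _ => ?_
  rw [filter_filter, sum_congr rfl fun e he => by rw [(mem_filter.1 he).2.2], sum_const,
    nsmul_eq_mul, incidence, Nat.card_eq_fintype_card, Fintype.card_subtype]

section Cylinders

lemma vertexAt_zero (x : B.Path) : B.vertexAt x 0 = B.uniqueV0.default :=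
  B.uniqueV0.uniq _

lemma vertexAt_succ (x : B.Path) (n : ℕ) : B.vertexAt x (n + 1) = B.rng n (x.1 n) :=
  (x.2 n).symm

lemma cylinder_zero (x : B.Path) : B.cylinder x 0 = Set.univ :=
  Set.eq_univ_of_forall fun _ k hk => absurd hk (Nat.not_lt_zero k)

lemma mem_cylinder_succ_iff {x y : B.Path} {n : ℕ} :
    y ∈ B.cylinder x (n + 1) ↔ y ∈ B.cylinder x n ∧ y.1 n = x.1 n := by
  simp only [cylinder, Set.mem_ofPred_eq, Nat.lt_succ_iff_lt_or_eq, or_imp, forall_and,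
    forall_eq]

lemma cylinder_anti (x : B.Path) : Antitone (B.cylinder x) :=
  fun _ _ hmn _ hy k hk => hy k (hk.trans_le hmn)

lemma cylinder_eq_of_mem {x z : B.Path} {n : ℕ} (hz : z ∈ B.cylinder x n) :
    B.cylinder z n = B.cylinder x n := by
  ext y
  exact ⟨fun hy k hk => (hy k hk).trans (hz k hk), fun hy k hk => (hy k hk).trans (hz k hk).symm⟩

lemma vertexAt_eq_of_mem_cylinder {x y : B.Path} {n : ℕ} (hy : y ∈ B.cylinder x n) :
    B.vertexAt y n = B.vertexAt x n := by
  cases n with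
  | zero => rw [vertexAt_zero, vertexAt_zero]
  | succ n => rw [vertexAt_succ, vertexAt_succ, hy n n.lt_succ_self]

lemma cylinder_succ_eq_inter {x z : B.Path} {n : ℕ} (hz : z ∈ B.cylinder x n) :
    B.cylinder z (n + 1) = B.cylinder x n ∩ {y | y.1 n = z.1 n} := by
  ext y
  rw [mem_cylinder_succ_iff, cylinder_eq_of_mem hz]
  rfl

lemma iInter_cylinder (x : B.Path) : ⋂ n, B.cylinder x n = {x} := by
  ext y
  refine ⟨fun hy => Subtype.ext <| funext fun k => Set.mem_iInter.1 hy (k + 1) k k.lt_succ_self,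
    fun hy => hy ▸ Set.mem_iInter.2 fun _ _ _ => rfl⟩

instance : T2Space B.Path :=
  inferInstanceAs (T2Space { x : ∀ n, B.E n // ∀ n, B.rng n (x n) = B.src (n + 1) (x (n + 1)) })

lemma continuous_edge (n : ℕ) : Continuous fun x : B.Path => x.1 n :=
  (continuous_apply n).comp continuous_subtype_val

lemma isOpen_cylinder (x : B.Path) (n : ℕ) : IsOpen (B.cylinder x n) := by
  have : B.cylinder x n = ⋂ k ∈ range n, (fun y : B.Path => y.1 k) ⁻¹' {x.1 k} := by
    ext y
    simp [cylinder]
  rw [this]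
  exact isOpen_biInter_finset fun k _ => (isOpen_discrete _).preimage (continuous_edge k)

lemma measurableSet_cylinder (x : B.Path) (n : ℕ) : MeasurableSet (B.cylinder x n) :=
  (isOpen_cylinder x n).measurableSet

instance (n : ℕ) : MeasurableSpace (B.V n) := ⊤
instance (n : ℕ) : DiscreteMeasurableSpace (B.V n) := ⟨fun _ => trivial⟩
instance (n : ℕ) : MeasurableSpace (B.E n) := borel _
instance (n : ℕ) : BorelSpace (B.E n) := ⟨rfl⟩

lemma measurable_path_mk {α : Type*} [MeasurableSpace α] {f : α → ∀ n, B.E n}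
    (hf : ∀ n, Measurable fun a => f a n)
    (hpath : ∀ a n, B.rng n (f a n) = B.src (n + 1) (f a (n + 1))) :
    Measurable (β := B.Path) fun a => ⟨f a, hpath a⟩ := by
  let P := { x : ∀ n, B.E n // ∀ n, B.rng n (x n) = B.src (n + 1) (x (n + 1)) }
  have : BorelSpace P := Subtype.borelSpace _
  change @Measurable α P _ (borel P) fun a => (⟨f a, hpath a⟩ : P)
  rw [← this.measurable_eq]
  exact (measurable_pi_lambda _ hf).subtype_mk

end Cylinders

section Extension

instance (n : ℕ) : Nonempty (B.E n) := by
  induction n with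
  | zero => exact ⟨(B.src_surj 0 B.uniqueV0.default).choose⟩
  | succ n ih => exact ⟨(B.src_surj (n + 1) (B.rng n ih.some)).choose⟩

variable (B) in
noncomputable def nextEdge (n : ℕ) (e : B.E n) : B.E (n + 1) :=
  (B.src_surj (n + 1) (B.rng n e)).choose

variable (B) in
noncomputable def continueEdges (n : ℕ) (u : ∀ k, B.E k) : ∀ k, B.E k
  | 0 => u 0
  | k + 1 => if k + 1 ≤ n then u (k + 1) else B.nextEdge k (continueEdges n u k)

lemma continueEdges_of_le {n k : ℕ} (u : ∀ k, B.E k) (hk : k ≤ n) :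
    B.continueEdges n u k = u k := by
  cases k with
  | zero => rfl
  | succ k => exact if_pos hk

lemma continueEdges_chain {n : ℕ} {u : ∀ k, B.E k}
    (hu : ∀ k < n, B.rng k (u k) = B.src (k + 1) (u (k + 1))) (k : ℕ) :
    B.rng k (B.continueEdges n u k) = B.src (k + 1) (B.continueEdges n u (k + 1)) := by
  by_cases hk : k + 1 ≤ n
  · rw [continueEdges_of_le u hk, continueEdges_of_le u (by omega)]
    exact hu k hk
  · rw [continueEdges, if_neg hk]
    exact (B.src_surj (k + 1) _).choose_spec.symm

instance : Nonempty B.Path :=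
  ⟨⟨B.continueEdges 0 fun _ => Classical.arbitrary _,
    continueEdges_chain fun k hk => absurd hk (Nat.not_lt_zero k)⟩⟩

lemma exists_mem_cylinder_edge_eq (x : B.Path) {n : ℕ} {e : B.E n}
    (he : B.src n e = B.vertexAt x n) : ∃ z ∈ B.cylinder x n, z.1 n = e := by
  have hu : ∀ k < n, B.rng k (Function.update x.1 n e k) =
      B.src (k + 1) (Function.update x.1 n e (k + 1)) := by
    intro k hk
    rw [Function.update_of_ne hk.ne]
    rcases (Nat.succ_le_of_lt hk).eq_or_lt with rfl | hk'
    · rw [Function.update_self, he, vertexAt_succ]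
    · rw [Function.update_of_ne hk'.ne, x.2 k]
  refine ⟨⟨B.continueEdges n _, continueEdges_chain hu⟩, fun k hk => ?_, ?_⟩
  · simp [continueEdges_of_le _ hk.le, Function.update_of_ne hk.ne]
  · simp [continueEdges_of_le _ le_rfl]

lemma exists_vertexAt_eq (n : ℕ) (v : B.V n) : ∃ x : B.Path, B.vertexAt x n = v := by
  induction n with
  | zero => exact ⟨Classical.arbitrary _, (vertexAt_zero _).trans (B.uniqueV0.uniq v).symm⟩
  | succ n ih =>
    obtain ⟨e, rfl⟩ := B.rng_surj n v
    obtain ⟨x, hx⟩ := ih (B.src n e)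
    obtain ⟨z, -, hze⟩ := exists_mem_cylinder_edge_eq x hx.symm
    exact ⟨z, by rw [vertexAt_succ, hze]⟩

end Extension

section InvariantMeasures

variable {μ : Measure B.Path}

lemma IsRInvariant.measure_singleton_eq [IsFiniteMeasure μ] (hμ : B.IsRInvariant μ)
    {x y : B.Path} (hxy : B.TailEquiv x y) : μ {x} = μ {y} := by
  have hlim (z : B.Path) : Tendsto (fun n => μ (B.cylinder z n)) atTop (𝓝 (μ {z})) := by
    rw [← iInter_cylinder]
    exact tendsto_measure_iInter_atTop (fun n => (measurableSet_cylinder z n).nullMeasurableSet)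
      (cylinder_anti z) ⟨0, measure_ne_top μ _⟩
  obtain ⟨N, hN⟩ := hxy
  refine tendsto_nhds_unique (hlim x) ((hlim y).congr' ?_)
  filter_upwards [eventually_ge_atTop N] with n hn
  exact hμ y x n (by rw [vertexAt, vertexAt, hN n hn])

lemma IsRInvariant.measure_singleton_eq_zero [IsFiniteMeasure μ] (hμ : B.IsRInvariant μ)
    (hap : B.Aperiodic) (x : B.Path) : μ {x} = 0 :=
  (hap x).eq_zero_of_measure_singleton_eq fun _ hy => (hμ.measure_singleton_eq hy).symm

variable {p : (n : ℕ) → B.V n → ℝ}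

lemma nonneg_of_measureReal_cylinder
    (hp : ∀ n x, p n (B.vertexAt x n) = μ.real (B.cylinder x n)) (n : ℕ) (w : B.V n) :
    0 ≤ p n w := by
  obtain ⟨x, rfl⟩ := exists_vertexAt_eq n w
  exact (hp n x).symm ▸ measureReal_nonneg

variable [IsFiniteMeasure μ]

lemma measureReal_cylinder_eq_sum (hp : ∀ n x, p n (B.vertexAt x n) = μ.real (B.cylinder x n))
    (x : B.Path) (n : ℕ) :
    μ.real (B.cylinder x n) = ∑ e with B.src n e = B.vertexAt x n, p (n + 1) (B.rng n e) := by
  have hsplit : B.cylinder x n =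
      ⋃ e ∈ univ.filter (B.src n · = B.vertexAt x n), B.cylinder x n ∩ {y | y.1 n = e} := by
    ext y
    simp only [Set.mem_iUnion, Set.mem_inter_iff, Set.mem_ofPred_eq, mem_filter, mem_univ,
      true_and, exists_prop]
    exact ⟨fun hy => ⟨y.1 n, vertexAt_eq_of_mem_cylinder hy, hy, rfl⟩, fun ⟨_, _, hy, _⟩ => hy⟩
  rw [hsplit, measureReal_biUnion_finset]
  · refine sum_congr rfl fun e he => ?_
    obtain ⟨z, hz, rfl⟩ := exists_mem_cylinder_edge_eq x (mem_filter.1 he).2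
    rw [← cylinder_succ_eq_inter hz, ← hp, vertexAt_succ]
  · exact fun e _ f _ hef => Set.disjoint_left.2 fun y hye hyf => hef (hye.2.symm.trans hyf.2)
  · exact fun e _ => (measurableSet_cylinder x n).inter
      ((isOpen_discrete {e}).preimage (continuous_edge n)).measurableSet

lemma transAction_eq_of_measureReal_cylinder
    (hp : ∀ n x, p n (B.vertexAt x n) = μ.real (B.cylinder x n)) (n : ℕ) :
    B.transAction n (p (n + 1)) = p n := by
  funext v
  obtain ⟨x, rfl⟩ := exists_vertexAt_eq n v
  rw [transAction_apply_eq_sum_edges, hp, measureReal_cylinder_eq_sum hp]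

lemma sum_height_mul_transAction (n : ℕ) (r : B.V (n + 1) → ℝ) :
    ∑ w, (B.height n w : ℝ) * B.transAction n r w = ∑ v, (B.height (n + 1) v : ℝ) * r v := by
  simp only [transAction, height, Nat.cast_sum, Nat.cast_mul, mul_sum, sum_mul]
  rw [sum_comm]
  exact sum_congr rfl fun v _ => sum_congr rfl fun w _ => by ring

lemma sum_height_mul_eq_measureReal_univ
    (hp : ∀ n x, p n (B.vertexAt x n) = μ.real (B.cylinder x n)) (n : ℕ) :
    ∑ w, (B.height n w : ℝ) * p n w = μ.real Set.univ := by
  induction n with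
  | zero =>
    obtain ⟨x⟩ : Nonempty B.Path := inferInstance
    have : Subsingleton (B.V 0) := B.uniqueV0.instSubsingleton
    rw [Fintype.sum_subsingleton _ (B.vertexAt x 0), hp, cylinder_zero, height, Nat.cast_one,
      one_mul]
  | succ n ih =>
    rw [← sum_height_mul_transAction, transAction_eq_of_measureReal_cylinder hp, ih]

end InvariantMeasures

lemma push_eq_of_transAction {p : (n : ℕ) → B.V n → ℝ}
    (hp : ∀ n, B.transAction n (p (n + 1)) = p n) (n k : ℕ) : B.push n k (p (n + k)) = p n := by
  induction k with
  | zero => rfl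
  | succ k ih => exact (congrArg (B.push n k) (hp (n + k))).trans ih

lemma mem_coneInf_of_transAction {p : (n : ℕ) → B.V n → ℝ} (hp0 : ∀ n w, 0 ≤ p n w)
    (hp : ∀ n, B.transAction n (p (n + 1)) = p n) (n : ℕ) : p n ∈ B.coneInf n :=
  fun k _ => ⟨p (n + k), hp0 (n + k), push_eq_of_transAction hp n k⟩

section Flows

variable {q : (n : ℕ) → B.V n → ℝ}

variable (q) in
noncomputable def edgeOffset (n : ℕ) (e : B.E n) : ℝ :=
  intervalOffset (univ.filter (B.src n · = B.src n e)) (fun f => q (n + 1) (B.rng n f))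
    (Fintype.equivFin (B.E n)) e

variable (q) in
noncomputable def edgeInterval (n : ℕ) (e : B.E n) : Set ℝ :=
  Set.Ico (edgeOffset q n e) (edgeOffset q n e + q (n + 1) (B.rng n e))

lemma edgeOffset_eq {n : ℕ} {e : B.E n} {v : B.V n} (he : B.src n e = v) :
    edgeOffset q n e = intervalOffset (univ.filter (B.src n · = v))
      (fun f => q (n + 1) (B.rng n f)) (Fintype.equivFin (B.E n)) e := by
  rw [edgeOffset, he]

lemma edgeOffset_nonneg (hq0 : ∀ n w, 0 ≤ q n w) (n : ℕ) (e : B.E n) : 0 ≤ edgeOffset q n e :=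
  intervalOffset_nonneg (fun _ _ => hq0 _ _) e

lemma edgeInterval_subset (hq0 : ∀ n w, 0 ≤ q n w)
    (hq : ∀ n, B.transAction n (q (n + 1)) = q n) (n : ℕ) (e : B.E n) :
    edgeInterval q n e ⊆ Set.Ico 0 (q n (B.src n e)) := by
  refine Set.Ico_subset_Ico (edgeOffset_nonneg hq0 n e) ?_
  rw [edgeOffset, ← hq n, transAction_apply_eq_sum_edges]
  exact intervalOffset_add_le_sum (fun _ _ => hq0 _ _) (mem_filter.2 ⟨mem_univ e, rfl⟩)

lemma eq_of_mem_edgeInterval (hq0 : ∀ n w, 0 ≤ q n w) {n : ℕ} {e f : B.E n}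
    (hef : B.src n e = B.src n f) {t : ℝ} (he : t ∈ edgeInterval q n e)
    (hf : t ∈ edgeInterval q n f) : e = f := by
  rw [edgeInterval, edgeOffset_eq hef] at he
  rw [edgeInterval, edgeOffset_eq rfl] at hf
  exact eq_of_mem_Ico_intervalOffset (fun _ _ => hq0 _ _)
    (Fintype.equivFin _).injective.injOn (by simpa using hef) (by simp) he hf

lemma exists_mem_edgeInterval (hq : ∀ n, B.transAction n (q (n + 1)) = q n) {n : ℕ}
    {v : B.V n} {t : ℝ} (ht : t ∈ Set.Ico 0 (q n v)) :
    ∃ e, B.src n e = v ∧ t ∈ edgeInterval q n e := by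
  rw [← hq n, transAction_apply_eq_sum_edges] at ht
  obtain ⟨e, he, hte⟩ :=
    exists_mem_Ico_intervalOffset (Fintype.equivFin _).injective.injOn ht.1 ht.2
  have hev : B.src n e = v := (mem_filter.1 he).2
  exact ⟨e, hev, by rwa [edgeInterval, edgeOffset_eq hev]⟩

variable (q) in
noncomputable def selectEdge (n : ℕ) (s : B.V n × ℝ) : B.E n :=
  if h : ∃ e, B.src n e = s.1 ∧ s.2 ∈ edgeInterval q n e then h.choose
  else (B.src_surj n s.1).choose

lemma src_selectEdge (n : ℕ) (s : B.V n × ℝ) : B.src n (selectEdge q n s) = s.1 := by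
  unfold selectEdge
  split_ifs with h
  exacts [h.choose_spec.1, (B.src_surj n s.1).choose_spec]

lemma selectEdge_eq_iff (hq0 : ∀ n w, 0 ≤ q n w) {n : ℕ} {s : B.V n × ℝ} {e : B.E n} :
    selectEdge q n s = e ↔ (B.src n e = s.1 ∧ s.2 ∈ edgeInterval q n e) ∨
      ((¬∃ f, B.src n f = s.1 ∧ s.2 ∈ edgeInterval q n f) ∧ (B.src_surj n s.1).choose = e) := by
  unfold selectEdge
  split_ifs with h
  · refine ⟨fun he => he ▸ Or.inl h.choose_spec, ?_⟩
    rintro (he | ⟨hne, -⟩)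
    · exact eq_of_mem_edgeInterval hq0 (h.choose_spec.1.trans he.1.symm) h.choose_spec.2 he.2
    · exact absurd h hne
  · exact ⟨fun he => Or.inr ⟨h, he⟩, by rintro (he | ⟨-, he⟩); exacts [absurd ⟨e, he⟩ h, he]⟩

lemma selectEdge_eq_of_mem (hq0 : ∀ n w, 0 ≤ q n w) {n : ℕ} {s : B.V n × ℝ} {e : B.E n}
    (he : B.src n e = s.1) (hs : s.2 ∈ edgeInterval q n e) : selectEdge q n s = e :=
  (selectEdge_eq_iff hq0).2 (Or.inl ⟨he, hs⟩)

lemma mem_edgeInterval_selectEdge (hq0 : ∀ n w, 0 ≤ q n w)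
    (hq : ∀ n, B.transAction n (q (n + 1)) = q n) {n : ℕ} {s : B.V n × ℝ}
    (hs : s.2 ∈ Set.Ico 0 (q n s.1)) : s.2 ∈ edgeInterval q n (selectEdge q n s) := by
  obtain ⟨e, he, hse⟩ := exists_mem_edgeInterval hq hs
  rwa [selectEdge_eq_of_mem hq0 he hse]

lemma measurable_selectEdge (hq0 : ∀ n w, 0 ≤ q n w) (n : ℕ) : Measurable (selectEdge q n) := by
  refine measurable_to_countable' fun e => ?_
  have : selectEdge q n ⁻¹' {e} = {s | (B.src n e = s.1 ∧ s.2 ∈ edgeInterval q n e) ∨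
      ((¬∃ f, B.src n f = s.1 ∧ s.2 ∈ edgeInterval q n f) ∧ (B.src_surj n s.1).choose = e)} :=
    Set.ext fun _ => selectEdge_eq_iff hq0
  have hmem (f : B.E n) :
      Measurable fun s : B.V n × ℝ => B.src n f = s.1 ∧ s.2 ∈ edgeInterval q n f :=
    (Measurable.of_discrete.comp measurable_fst).and (measurableSet_Ico.mem.comp measurable_snd)
  rw [this]
  exact measurableSet_setOfPred.2 <| (hmem e).or <|
    (Measurable.exists hmem).not.and
      ((Measurable.of_discrete (f := fun v => (B.src_surj n v).choose = e)).comp measurable_fst)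

variable (q) in
/-- The coding of `t` by a path runs through states `(v, s)`: `v` is the vertex reached and
`s ∈ [0, q n v)` is the position of `t` relative to the left end of the current cylinder's
interval. -/
noncomputable def codeStep (n : ℕ) (s : B.V n × ℝ) : B.V (n + 1) × ℝ :=
  (B.rng n (selectEdge q n s), s.2 - edgeOffset q n (selectEdge q n s))

variable (q) in
noncomputable def codeState (t : ℝ) : (n : ℕ) → B.V n × ℝ
  | 0 => (B.uniqueV0.default, t)
  | n + 1 => codeStep q n (codeState t n)

variable (q) in
noncomputable def codePath (t : ℝ) : B.Path :=
  ⟨fun n => selectEdge q n (codeState q t n),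
    fun n => (src_selectEdge (q := q) (n + 1) (codeState q t (n + 1))).symm⟩

variable (q) in
noncomputable def address (x : B.Path) (n : ℕ) : ℝ := ∑ k ∈ range n, edgeOffset q k (x.1 k)

variable (q) in
noncomputable def cylinderInterval (x : B.Path) (n : ℕ) : Set ℝ :=
  Set.Ico (address q x n) (address q x n + q n (B.vertexAt x n))

lemma measurable_codePath (hq0 : ∀ n w, 0 ≤ q n w) : Measurable (codePath q) := by
  have hstep (n : ℕ) : Measurable (codeStep q n) :=
    ((Measurable.of_discrete (f := B.rng n)).comp (measurable_selectEdge hq0 n)).prodMk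
      (measurable_snd.sub
        ((Measurable.of_discrete (f := edgeOffset q n)).comp (measurable_selectEdge hq0 n)))
  have hstate (n : ℕ) : Measurable fun t => codeState q t n := by
    induction n with
    | zero => exact measurable_const.prodMk measurable_id
    | succ n ih => exact (hstep n).comp ih
  exact measurable_path_mk (fun n => (measurable_selectEdge hq0 n).comp (hstate n)) _

lemma codeState_eq (t : ℝ) (n : ℕ) :
    codeState q t n = (B.vertexAt (codePath q t) n, t - address q (codePath q t) n) := by
  induction n with
  | zero => exact Prod.ext (vertexAt_zero _).symm (by simp [codeState, address])
  | succ n ih =>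
    change codeStep q n (codeState q t n) = _
    refine Prod.ext (vertexAt_succ (codePath q t) n).symm ?_
    change (codeState q t n).2 - edgeOffset q n ((codePath q t).1 n) = _
    simp only [ih, address, sum_range_succ]
    ring

lemma selectEdge_codeState (t : ℝ) (n : ℕ) :
    selectEdge q n (B.vertexAt (codePath q t) n, t - address q (codePath q t) n) =
      (codePath q t).1 n := by
  rw [← codeState_eq]
  rfl

lemma mem_cylinderInterval_iff {x : B.Path} {n : ℕ} {t : ℝ} :
    t ∈ cylinderInterval q x n ↔ t - address q x n ∈ Set.Ico 0 (q n (B.vertexAt x n)) := by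
  simp only [cylinderInterval, Set.mem_Ico, sub_nonneg, sub_lt_iff_lt_add']

lemma mem_cylinderInterval_succ_iff {x : B.Path} {n : ℕ} {t : ℝ} :
    t ∈ cylinderInterval q x (n + 1) ↔ t - address q x n ∈ edgeInterval q n (x.1 n) := by
  simp only [cylinderInterval, edgeInterval, address, sum_range_succ, vertexAt_succ, Set.mem_Ico]
  constructor <;> rintro ⟨h₁, h₂⟩ <;> constructor <;> linarith

lemma cylinderInterval_zero (x : B.Path) :
    cylinderInterval q x 0 = Set.Ico 0 (q 0 B.uniqueV0.default) := by
  simp [cylinderInterval, address, vertexAt_zero]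

lemma address_congr {x y : B.Path} {n : ℕ} (hy : y ∈ B.cylinder x n) :
    address q y n = address q x n :=
  sum_congr rfl fun k hk => by rw [hy k (mem_range.1 hk)]

lemma cylinderInterval_congr {x y : B.Path} {n : ℕ} (hy : y ∈ B.cylinder x n) :
    cylinderInterval q y n = cylinderInterval q x n := by
  rw [cylinderInterval, cylinderInterval, address_congr hy, vertexAt_eq_of_mem_cylinder hy]

lemma cylinderInterval_succ_subset (hq0 : ∀ n w, 0 ≤ q n w)
    (hq : ∀ n, B.transAction n (q (n + 1)) = q n) (x : B.Path) (n : ℕ) :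
    cylinderInterval q x (n + 1) ⊆ cylinderInterval q x n := fun _ ht =>
  mem_cylinderInterval_iff.2 (edgeInterval_subset hq0 hq n _ (mem_cylinderInterval_succ_iff.1 ht))

lemma cylinderInterval_subset (hq0 : ∀ n w, 0 ≤ q n w)
    (hq : ∀ n, B.transAction n (q (n + 1)) = q n) (x : B.Path) (n : ℕ) :
    cylinderInterval q x n ⊆ Set.Ico 0 (q 0 B.uniqueV0.default) := by
  induction n with
  | zero => rw [cylinderInterval_zero]
  | succ n ih => exact (cylinderInterval_succ_subset hq0 hq x n).trans ih

lemma mem_cylinderInterval_codePath (hq0 : ∀ n w, 0 ≤ q n w)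
    (hq : ∀ n, B.transAction n (q (n + 1)) = q n) {t : ℝ}
    (ht : t ∈ Set.Ico 0 (q 0 B.uniqueV0.default)) (n : ℕ) :
    t ∈ cylinderInterval q (codePath q t) n := by
  induction n with
  | zero => rwa [cylinderInterval_zero]
  | succ n ih =>
    rw [mem_cylinderInterval_succ_iff, ← selectEdge_codeState]
    exact mem_edgeInterval_selectEdge hq0 hq (mem_cylinderInterval_iff.1 ih)

lemma codePath_mem_cylinder_iff (hq0 : ∀ n w, 0 ≤ q n w)
    (hq : ∀ n, B.transAction n (q (n + 1)) = q n) {t : ℝ}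
    (ht : t ∈ Set.Ico 0 (q 0 B.uniqueV0.default)) (x : B.Path) (n : ℕ) :
    codePath q t ∈ B.cylinder x n ↔ t ∈ cylinderInterval q x n := by
  refine ⟨fun h => cylinderInterval_congr h ▸ mem_cylinderInterval_codePath hq0 hq ht n, ?_⟩
  induction n with
  | zero => exact fun _ => (cylinder_zero x).symm ▸ Set.mem_univ _
  | succ n ih =>
    intro hxt
    have hn := ih (cylinderInterval_succ_subset hq0 hq x n hxt)
    refine mem_cylinder_succ_iff.2 ⟨hn, ?_⟩
    -- on the cylinder of `x`, the coding state at level `n` is that of `x`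
    rw [← selectEdge_codeState, vertexAt_eq_of_mem_cylinder hn, address_congr hn]
    exact selectEdge_eq_of_mem hq0 rfl (mem_cylinderInterval_succ_iff.1 hxt)

variable (q) in
noncomputable def flowMeasure : Measure B.Path :=
  (volume.restrict (Set.Ico 0 (q 0 B.uniqueV0.default))).map (codePath q)

instance : IsFiniteMeasure (flowMeasure q) := by
  unfold flowMeasure
  infer_instance

lemma flowMeasure_cylinder (hq0 : ∀ n w, 0 ≤ q n w)
    (hq : ∀ n, B.transAction n (q (n + 1)) = q n) (x : B.Path) (n : ℕ) :
    flowMeasure q (B.cylinder x n) = ENNReal.ofReal (q n (B.vertexAt x n)) := by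
  have hsub := cylinderInterval_subset hq0 hq x n
  have hpre : codePath q ⁻¹' B.cylinder x n ∩ Set.Ico 0 (q 0 B.uniqueV0.default) =
      cylinderInterval q x n :=
    Set.ext fun t => ⟨fun ⟨h, ht⟩ => (codePath_mem_cylinder_iff hq0 hq ht x n).1 h,
      fun h => ⟨(codePath_mem_cylinder_iff hq0 hq (hsub h) x n).2 h, hsub h⟩⟩
  have hmeas := measurable_codePath hq0 (measurableSet_cylinder x n)
  rw [flowMeasure, Measure.map_apply (measurable_codePath hq0) (measurableSet_cylinder x n),
    Measure.restrict_apply hmeas, hpre, cylinderInterval, Real.volume_Ico, add_sub_cancel_left]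

lemma isRInvariant_flowMeasure (hq0 : ∀ n w, 0 ≤ q n w)
    (hq : ∀ n, B.transAction n (q (n + 1)) = q n) : B.IsRInvariant (flowMeasure q) :=
  fun x y n h => by rw [flowMeasure_cylinder hq0 hq, flowMeasure_cylinder hq0 hq, h]

end Flows

noncomputable def extendToRoot (p : (n : ℕ) → B.V n → ℝ) : (n : ℕ) → B.V n → ℝ
  | 0 => B.transAction 0 (p 1)
  | n + 1 => p (n + 1)

lemma extendToRoot_nonneg {p : (n : ℕ) → B.V n → ℝ} (hp0 : ∀ n w, 0 ≤ p n w) :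
    ∀ n w, 0 ≤ extendToRoot p n w
  | 0, _ => sum_nonneg fun v _ => mul_nonneg (Nat.cast_nonneg _) (hp0 1 v)
  | _ + 1, w => hp0 _ w

lemma transAction_extendToRoot {p : (n : ℕ) → B.V n → ℝ}
    (hp : ∀ n, 1 ≤ n → B.transAction n (p (n + 1)) = p n) :
    ∀ n, B.transAction n (extendToRoot p (n + 1)) = extendToRoot p n
  | 0 => rfl
  | n + 1 => hp (n + 1) n.succ_pos

end BratteliDiagram

open BratteliDiagram

/-- Description of finite `R`-invariant measures on a Bratteli diagram
with aperiodic tail equivalence relation, via the sequences of vectors of cylinder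
measures: (1) such a measure gives vectors in the cones `C_n^∞` satisfying
`F_n^T p^{(n+1)} = p^{(n)}`; (2) conversely any nonnegative sequence satisfying the
recursion comes from a (non-atomic) finite invariant Borel measure; (3) the measure is a
probability measure iff `Σ_w h^{(1)}_w p^{(1)}_w = 1`, in which case this holds at every
level. -/
theorem invariantMeasures_of_brattelidiagram (B : BratteliDiagram) (hap : B.Aperiodic) :
    (∀ μ : Measure B.Path, IsFiniteMeasure μ → B.IsRInvariant μ →
      ∀ p : (n : ℕ) → B.V n → ℝ,
        (∀ (n : ℕ) (x : B.Path), p n (B.vertexAt x n) = (μ (B.cylinder x n)).toReal) →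
        (∀ n, 1 ≤ n → p n ∈ B.coneInf n) ∧
        (∀ n, 1 ≤ n → B.transAction n (p (n + 1)) = p n)) ∧
    (∀ p : (n : ℕ) → B.V n → ℝ, (∀ n w, 0 ≤ p n w) →
      (∀ n, 1 ≤ n → B.transAction n (p (n + 1)) = p n) →
      ∃ μ : Measure B.Path, IsFiniteMeasure μ ∧ (∀ x : B.Path, μ {x} = 0) ∧
        B.IsRInvariant μ ∧
        ∀ (n : ℕ) (x : B.Path), 1 ≤ n →
          (μ (B.cylinder x n)).toReal = p n (B.vertexAt x n)) ∧
    (∀ μ : Measure B.Path, IsFiniteMeasure μ → B.IsRInvariant μ →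
      ∀ p : (n : ℕ) → B.V n → ℝ,
        (∀ (n : ℕ) (x : B.Path), p n (B.vertexAt x n) = (μ (B.cylinder x n)).toReal) →
        ((IsProbabilityMeasure μ ↔ ∑ w : B.V 1, (B.height 1 w : ℝ) * p 1 w = 1) ∧
         (IsProbabilityMeasure μ →
            ∀ n, 1 ≤ n → ∑ w : B.V n, (B.height n w : ℝ) * p n w = 1))) := by
  refine ⟨fun μ _ _ p hp => ?_, fun p hp0 hp => ?_, fun μ _ _ p hp => ?_⟩
  · have hrec := transAction_eq_of_measureReal_cylinder hp
    exact ⟨fun n _ => mem_coneInf_of_transAction (nonneg_of_measureReal_cylinder hp) hrec n,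
      fun n _ => hrec n⟩
  · have hq0 := extendToRoot_nonneg hp0
    have hq := transAction_extendToRoot hp
    have hμ := isRInvariant_flowMeasure hq0 hq
    refine ⟨flowMeasure (extendToRoot p), inferInstance, hμ.measure_singleton_eq_zero hap, hμ,
      fun n x hn => ?_⟩
    obtain ⟨n, rfl⟩ := Nat.exists_eq_add_of_le' hn
    rw [flowMeasure_cylinder hq0 hq, ENNReal.toReal_ofReal (hq0 _ _)]
    rfl
  · have hmass := sum_height_mul_eq_measureReal_univ hp
    rw [hmass, ← isProbabilityMeasure_iff_real]
    exact ⟨Iff.rfl, fun h n _ => (hmass n).trans (isProbabilityMeasure_iff_real.1 h)⟩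
end

section
/- Let B be a stationary Bratteli diagram whose tail equivalence relation R is aperiodic and whose incidence matrix F satisfies condition (I). Let Λ be the set of classes α with F_α ≠ 0, B_α the subdiagram of B on the vertices of class α, Y_α its path space, and X_α the R-saturation of Y_α (the paths tail-equivalent to a path in Y_α). Then for every α ∈ Λ and every x ∈ X_α, the closure of the R-class of x equals ∪_{β ∈ Λ, β ⪰ α} X_β, where ⪰ is the access relation in R(A), A = F^T. Consequently, the minimal components of X_B for R (the minimal nonempty closed R-saturated subsets) are exactly X_1,…,X_s, those X_α with α an initial class of R(A). -/
open MeasureTheory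

/-- A stationary Bratteli diagram with vertex set `Fin N` at every level `n ≥ 1`:
`Edge0` is the set of edges from the top vertex `v₀` to level 1, and `Edge` is the
(common) set of edges between two consecutive levels `n, n+1` for `n ≥ 1`. -/
structure StationaryBratteli (N : ℕ) where
  Edge0 : Type
  Edge : Type
  fintypeE0 : Fintype Edge0
  fintypeE : Fintype Edge
  rng0 : Edge0 → Fin N
  src : Edge → Fin N
  rng : Edge → Fin N
  rng0_surj : Function.Surjective rng0
  src_surj : Function.Surjective src
  rng_surj : Function.Surjective rng

namespace StationaryBratteli

variable {N : ℕ} (B : StationaryBratteli N)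

instance : Fintype B.Edge0 := B.fintypeE0
instance : Fintype B.Edge := B.fintypeE
instance : TopologicalSpace B.Edge0 := ⊥
instance : TopologicalSpace B.Edge := ⊥

/-- The path space `X_B`: an edge from `v₀` together with a compatible sequence of edges
through the subsequent levels. -/
def Path : Type :=
  { x : B.Edge0 × (ℕ → B.Edge) //
      B.rng0 x.1 = B.src (x.2 0) ∧ ∀ n, B.rng (x.2 n) = B.src (x.2 (n + 1)) }

instance : TopologicalSpace B.Path :=
  inferInstanceAs (TopologicalSpace
    { x : B.Edge0 × (ℕ → B.Edge) //
        B.rng0 x.1 = B.src (x.2 0) ∧ ∀ n, B.rng (x.2 n) = B.src (x.2 (n + 1)) })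

noncomputable instance : MeasurableSpace B.Path := borel B.Path
instance : BorelSpace B.Path := ⟨rfl⟩

/-- The vertex (at level `n + 1`) through which the path `x` passes. -/
def vtx (x : B.Path) (n : ℕ) : Fin N := B.src (x.1.2 n)

/-- The cylinder set of paths agreeing with `x` on the initial edge and on the first `n`
subsequent edges (a finite path ending at the vertex `B.vtx x n` of level `n + 1`). -/
def cylinder (x : B.Path) (n : ℕ) : Set B.Path :=
  { y | y.1.1 = x.1.1 ∧ ∀ k, k < n → y.1.2 k = x.1.2 k }

/-- The tail (cofinal) equivalence relation on the path space. -/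
def TailEquiv (x y : B.Path) : Prop := ∃ M : ℕ, ∀ n, M ≤ n → x.1.2 n = y.1.2 n

/-- The tail equivalence relation is aperiodic: every class is infinite. -/
def Aperiodic : Prop := ∀ x : B.Path, { y | B.TailEquiv x y }.Infinite

/-- A (Borel) measure on the path space is `R`-invariant iff any two cylinder sets given
by finite initial paths ending at the same vertex have equal measure. -/
def IsRInvariant (μ : Measure B.Path) : Prop :=
  ∀ (x y : B.Path) (n : ℕ), B.vtx x n = B.vtx y n →
    μ (B.cylinder x n) = μ (B.cylinder y n)

/-- A subset of the path space is saturated with respect to the tail equivalence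
relation. -/
def Saturated (S : Set B.Path) : Prop := ∀ x ∈ S, ∀ y, B.TailEquiv x y → y ∈ S

/-- An `R`-invariant measure is ergodic iff every saturated Borel set is null or
conull. -/
def ErgodicR (μ : Measure B.Path) : Prop :=
  ∀ S : Set B.Path, MeasurableSet S → B.Saturated S → μ S = 0 ∨ μ Sᶜ = 0

/-- The incidence matrix `F` of the stationary diagram: `F v w` is the number of edges
from the vertex `w` (lower level) to the vertex `v` (next level). -/
noncomputable def F : Matrix (Fin N) (Fin N) ℕ :=
  fun v w => Nat.card { e : B.Edge // B.src e = w ∧ B.rng e = v }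

/-- The incidence matrix as a real matrix. -/
noncomputable def Fmat : Matrix (Fin N) (Fin N) ℝ := fun v w => (B.F v w : ℝ)

/-- The matrix `A = F^T` (with real entries). -/
noncomputable def A : Matrix (Fin N) (Fin N) ℝ := B.Fmat.transpose

/-- The heights: `heightS n w` is the number of finite paths from the top vertex `v₀` to
the vertex `w` at level `n + 1` (so it is the height vector `h^{(n+1)}` of the paper). -/
noncomputable def heightS : ℕ → Fin N → ℕ
  | 0 => fun w => Nat.card { e : B.Edge0 // B.rng0 e = w }
  | (n + 1) => fun v => ∑ w : Fin N, B.F v w * heightS n w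

end StationaryBratteli


section PerronFrobenius

variable {ι : Type} [Fintype ι] [DecidableEq ι]

/-- The vertex `i` has access to the vertex `j` in the directed graph `G(M)` of the
nonnegative matrix `M` (an arrow from `a` to `b` iff `M a b ≠ 0`). -/
def MAccess (M : Matrix ι ι ℝ) (i j : ι) : Prop :=
  Relation.ReflTransGen (fun a b => M a b ≠ 0) i j

/-- Two vertices communicate (belong to the same class) iff each has access to the
other. -/
def MComm (M : Matrix ι ι ℝ) (i j : ι) : Prop := MAccess M i j ∧ MAccess M j i

/-- The communicating class of the vertex `i`. -/
def classOf (M : Matrix ι ι ℝ) (i : ι) : Set ι := { j | MComm M i j }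

/-- The diagonal block corresponding to the class of `i` is nonzero. -/
def BlockNonzero (M : Matrix ι ι ℝ) (i : ι) : Prop :=
  ∃ a ∈ classOf M i, ∃ b ∈ classOf M i, M a b ≠ 0

/-- The diagonal block corresponding to the class of `i` is primitive: some power of `M`
is strictly positive on this class (paths between vertices of a class stay in the class,
so this is equivalent to primitivity of the diagonal block). -/
def BlockPrimitive (M : Matrix ι ι ℝ) (i : ι) : Prop :=
  ∃ k : ℕ, 1 ≤ k ∧ ∀ a ∈ classOf M i, ∀ b ∈ classOf M i, 0 < (M ^ k) a b

/-- The diagonal block corresponding to the class of `i` is strictly positive. -/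
def BlockPositive (M : Matrix ι ι ℝ) (i : ι) : Prop :=
  ∀ a ∈ classOf M i, ∀ b ∈ classOf M i, 0 < M a b

/-- The class of `i` is initial in the reduced graph `R(M)`: no other class has access
to it. -/
def InitialClass (M : Matrix ι ι ℝ) (i : ι) : Prop :=
  ∀ j, MAccess M j i → MComm M j i

/-- The spectral radius of a real square matrix: the largest absolute value of a complex
eigenvalue. -/
noncomputable def specRad {κ : Type} [Fintype κ] [DecidableEq κ] (M : Matrix κ κ ℝ) : ℝ :=
  sSup { r : ℝ | ∃ z : ℂ, z ∈ spectrum ℂ (M.map Complex.ofReal) ∧ r = ‖z‖ }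

/-- The spectral radius `ρ_α` of the diagonal block of `M` corresponding to the class of
the vertex `i`. -/
noncomputable def blockSpecRad (M : Matrix ι ι ℝ) (i : ι) : ℝ :=
  letI : Fintype (classOf M i) := (Set.toFinite (classOf M i)).fintype
  specRad (M.submatrix (Subtype.val : classOf M i → ι) Subtype.val)

/-- The class of `i` is distinguished: its spectral radius strictly dominates the
spectral radius of every other class having access to it. -/
def Distinguished (M : Matrix ι ι ℝ) (i : ι) : Prop :=
  ∀ j, MAccess M j i → ¬ MComm M j i → blockSpecRad M j < blockSpecRad M i

/-- `λ` is a distinguished eigenvalue of `M`: there is a nonzero nonnegative eigenvector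
for `λ`. -/
def DistinguishedEigenvalue (M : Matrix ι ι ℝ) (lam : ℝ) : Prop :=
  ∃ v : ι → ℝ, v ≠ 0 ∧ (∀ j, 0 ≤ v j) ∧ M.mulVec v = lam • v

/-- `ξ` is the distinguished eigenvector associated to the distinguished class of `i`:
a nonnegative eigenvector for the eigenvalue `ρ_α` whose coordinate at a vertex `j` is
positive iff `j` has access to the class. -/
def IsDistinguishedEigenvector (M : Matrix ι ι ℝ) (i : ι) (ξ : ι → ℝ) : Prop :=
  (∀ j, 0 ≤ ξ j) ∧ M.mulVec ξ = blockSpecRad M i • ξ ∧ ∀ j, (0 < ξ j ↔ MAccess M j i)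

/-- The core of a nonnegative matrix: `core(M) = ⋂_{k ≥ 1} M^k (ℝ^N_+)`. -/
def matCore (M : Matrix ι ι ℝ) : Set (ι → ℝ) :=
  { x | ∀ k : ℕ, 1 ≤ k → ∃ y : ι → ℝ, (∀ j, 0 ≤ y j) ∧ (M ^ k).mulVec y = x }

/-- `M` is in Frobenius normal form: block lower triangular with respect to the
communicating classes and the classes are intervals of indices (the diagonal blocks are
automatically irreducible). -/
def FrobeniusForm [LinearOrder ι] (M : Matrix ι ι ℝ) : Prop :=
  (∀ i j, M i j ≠ 0 → MComm M i j ∨ j < i) ∧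
  (∀ i j k, i ≤ j → j ≤ k → MComm M i k → MComm M i j)

/-- Condition (I): `M` is in Frobenius normal form and every nonzero diagonal block is
primitive. -/
def CondI [LinearOrder ι] (M : Matrix ι ι ℝ) : Prop :=
  FrobeniusForm M ∧ ∀ i, BlockNonzero M i → BlockPrimitive M i

/-- Condition (I′): `M` is in Frobenius normal form and every nonzero diagonal block is
strictly positive. -/
def CondI' [LinearOrder ι] (M : Matrix ι ι ℝ) : Prop :=
  FrobeniusForm M ∧ ∀ i, BlockNonzero M i → BlockPositive M i

end PerronFrobenius

namespace StationaryBratteli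

variable {N : ℕ} (B : StationaryBratteli N)

/-- The path space `Y_α` of the subdiagram `B_α` on the vertices of the class of `i`:
the paths all of whose vertices (from level 1 on) lie in the class. -/
def Ysub (i : Fin N) : Set B.Path := { x | ∀ n, B.vtx x n ∈ classOf B.A i }

/-- `X_α`: the saturation of `Y_α` with respect to the tail equivalence relation. -/
def Xsat (i : Fin N) : Set B.Path := { x | ∃ y ∈ B.Ysub i, B.TailEquiv y x }

end StationaryBratteli

/-!
Along a path the vertices only move down the access order of `A`, so every path eventually
stays in a single class `β ∈ Λ`, and primitivity of `F_β` lets it be replaced, up to tail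
equivalence, by a path of `B_β`. Hence `⋃_{β ⪰ α} X_β` is the closed set of paths all of whose
vertices have access to `α`, which contains the `R`-class of every `x ∈ X_α`. Conversely, for
`w ∈ X_β` with `β ⪰ α`, all large powers of `A` are positive from the class `β` to the class
`α`, so an initial segment of `w` can be joined by a finite path to the tail of `x`: the
`R`-class of `x` meets every cylinder around `w`. For an initial class `α` this makes `X_α`
closed and the orbit closure of each of its points, and every class is accessed by an initial
one, which gives the minimal components.
-/

section Access

open Filter Relation
open scoped Matrix

variable {ι : Type} {M : Matrix ι ι ℝ} {i j a b c : ι}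

lemma mem_classOf_self : i ∈ classOf M i := ⟨.refl, .refl⟩

lemma MComm.symm (h : MComm M i j) : MComm M j i := ⟨h.2, h.1⟩

lemma classOf_eq_of_mComm (h : MComm M i j) : classOf M i = classOf M j := by
  ext d
  exact ⟨fun hd => ⟨h.2.trans hd.1, hd.2.trans h.1⟩, fun hd => ⟨h.1.trans hd.1, hd.2.trans h.2⟩⟩

lemma mem_classOf_of_mAccess (ha : a ∈ classOf M i) (hb : b ∈ classOf M i)
    (hac : MAccess M a c) (hcb : MAccess M c b) : c ∈ classOf M i :=
  ⟨ha.1.trans hac, hcb.trans hb.2⟩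

lemma mAccess_transpose : MAccess Mᵀ a b ↔ MAccess M b a :=
  reflTransGen_swap

lemma classOf_transpose : classOf Mᵀ i = classOf M i := by
  ext j
  simp only [classOf, MComm, Set.mem_ofPred_eq, mAccess_transpose, and_comm]

lemma blockNonzero_transpose : BlockNonzero Mᵀ i ↔ BlockNonzero M i := by
  simp only [BlockNonzero, classOf_transpose, Matrix.transpose_apply]
  exact ⟨fun ⟨a, ha, b, hb, h⟩ => ⟨b, hb, a, ha, h⟩, fun ⟨a, ha, b, hb, h⟩ => ⟨b, hb, a, ha, h⟩⟩

lemma InitialClass.blockNonzero (hcol : ∀ b, ∃ a, M a b ≠ 0) (h : InitialClass M i) :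
    BlockNonzero M i := by
  obtain ⟨a, ha⟩ := hcol i
  exact ⟨a, (h a (.single ha)).symm, i, mem_classOf_self, ha⟩

lemma exists_initialClass_mAccess [Finite ι] (M : Matrix ι ι ℝ) (b : ι) :
    ∃ g, InitialClass M g ∧ MAccess M g b := by
  let r : ι → ι → Prop := fun j g => MAccess M j g ∧ ¬ MAccess M g j
  have : IsTrans ι r := ⟨fun _ _ _ h₁ h₂ => ⟨h₁.1.trans h₂.1, fun h => h₁.2 (h₂.1.trans h)⟩⟩
  have : Std.Irrefl r := ⟨fun _ h => h.2 .refl⟩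
  obtain ⟨g, hgb, hmin⟩ :=
    (Finite.wellFounded_of_trans_of_irrefl r).has_min {g | MAccess M g b} ⟨b, .refl⟩
  exact ⟨g, fun j hjg => ⟨hjg, not_not.1 fun h => hmin j (hjg.trans hgb) ⟨hjg, h⟩⟩, hgb⟩

variable [Fintype ι]

lemma exists_ne_zero_of_mul_apply_ne_zero {P Q : Matrix ι ι ℝ} (h : (P * Q) a b ≠ 0) :
    ∃ c, P a c ≠ 0 ∧ Q c b ≠ 0 := by
  rw [Matrix.mul_apply] at h
  obtain ⟨c, -, hc⟩ := Finset.exists_ne_zero_of_sum_ne_zero h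
  exact ⟨c, left_ne_zero_of_mul hc, right_ne_zero_of_mul hc⟩

variable [DecidableEq ι]

lemma BlockPrimitive.transpose (h : BlockPrimitive M i) : BlockPrimitive Mᵀ i := by
  obtain ⟨k, hk1, hk⟩ := h
  refine ⟨k, hk1, fun a ha b hb => ?_⟩
  rw [classOf_transpose] at ha hb
  rw [← Matrix.transpose_pow]
  exact hk b hb a ha

lemma CondI.blockPrimitive_transpose [LinearOrder ι] (hM : CondI M) (h : BlockNonzero Mᵀ i) :
    BlockPrimitive Mᵀ i :=
  (hM.2 i (blockNonzero_transpose.1 h)).transpose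

lemma pow_add_apply_pos (hM : ∀ a b, 0 ≤ M a b) {k l : ℕ} (h₁ : 0 < (M ^ k) a c)
    (h₂ : 0 < (M ^ l) c b) : 0 < (M ^ (k + l)) a b := by
  rw [pow_add, Matrix.mul_apply]
  exact Finset.sum_pos' (fun d _ => mul_nonneg (Matrix.pow_apply_nonneg hM k a d)
    (Matrix.pow_apply_nonneg hM l d b)) ⟨c, Finset.mem_univ c, mul_pos h₁ h₂⟩

lemma mAccess_of_pow_apply_ne_zero : ∀ {k : ℕ} {a b : ι}, (M ^ k) a b ≠ 0 → MAccess M a b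
  | 0, a, b, h => by
    obtain rfl : a = b := by
      by_contra hne
      exact h (Matrix.one_apply_ne hne)
    exact .refl
  | k + 1, a, b, h => by
    rw [pow_succ'] at h
    obtain ⟨c, hac, hcb⟩ := exists_ne_zero_of_mul_apply_ne_zero h
    exact .head hac (mAccess_of_pow_apply_ne_zero hcb)

lemma MAccess.exists_pow_apply_pos (hM : ∀ a b, 0 ≤ M a b) (h : MAccess M a b) :
    ∃ k, 0 < (M ^ k) a b := by
  induction h with
  | refl => exact ⟨0, by simp⟩
  | tail _ hbc ih =>
    obtain ⟨k, hk⟩ := ih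
    exact ⟨k + 1, pow_add_apply_pos hM hk (by simpa using (hM _ _).lt_of_ne' hbc)⟩

lemma BlockPrimitive.exists_succ_mem_classOf (h : BlockPrimitive M i) (ha : a ∈ classOf M i) :
    ∃ c ∈ classOf M i, M a c ≠ 0 := by
  obtain ⟨k, hk1, hk⟩ := h
  obtain ⟨k, rfl⟩ := Nat.exists_eq_add_of_le' hk1
  have haa := (hk a ha a ha).ne'
  rw [pow_succ'] at haa
  obtain ⟨c, hac, hca⟩ := exists_ne_zero_of_mul_apply_ne_zero haa
  exact ⟨c, mem_classOf_of_mAccess ha ha (.single hac) (mAccess_of_pow_apply_ne_zero hca), hac⟩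

lemma BlockPrimitive.eventually_pow_pos (hM : ∀ a b, 0 ≤ M a b) (h : BlockPrimitive M i) :
    ∀ᶠ m in atTop, ∀ a ∈ classOf M i, ∀ b ∈ classOf M i, 0 < (M ^ m) a b := by
  obtain ⟨k, -, hk⟩ := id h
  refine eventually_atTop.2 ⟨k, fun m hm => ?_⟩
  induction m, hm using Nat.le_induction with
  | base => exact hk
  | succ m _ ih =>
    intro a ha b hb
    obtain ⟨c, hc, hac⟩ := h.exists_succ_mem_classOf ha
    rw [add_comm]
    exact pow_add_apply_pos hM (by simpa using (hM a c).lt_of_ne' hac) (ih c hc b hb)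

/-- Primitivity of both blocks lets a connecting walk be padded to every large length. -/
lemma BlockPrimitive.eventually_pow_pos_of_mAccess (hM : ∀ a b, 0 ≤ M a b)
    (hj : BlockPrimitive M j) (hi : BlockPrimitive M i) (hji : MAccess M j i) :
    ∀ᶠ m in atTop, ∀ a ∈ classOf M j, ∀ b ∈ classOf M i, 0 < (M ^ m) a b := by
  obtain ⟨kj, hkj⟩ := eventually_atTop.1 (hj.eventually_pow_pos hM)
  obtain ⟨ki, hki⟩ := eventually_atTop.1 (hi.eventually_pow_pos hM)
  obtain ⟨l, hl⟩ := hji.exists_pow_apply_pos hM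
  refine eventually_atTop.2 ⟨kj + l + ki, fun m hm a ha b hb => ?_⟩
  obtain ⟨d, rfl⟩ := Nat.exists_eq_add_of_le hm
  rw [add_assoc]
  exact pow_add_apply_pos hM (pow_add_apply_pos hM (hkj kj le_rfl a ha j mem_classOf_self) hl)
    (hki (ki + d) (Nat.le_add_right ki d) i mem_classOf_self b hb)

end Access

namespace StationaryBratteli

open Filter

variable {N : ℕ} (B : StationaryBratteli N)

instance : DiscreteTopology B.Edge := ⟨rfl⟩

lemma A_ne_zero_iff {w v : Fin N} : B.A w v ≠ 0 ↔ ∃ e : B.Edge, B.src e = w ∧ B.rng e = v := by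
  simp only [A, Fmat, F, Matrix.transpose_apply, Nat.cast_ne_zero, Nat.card_ne_zero]
  exact ⟨fun ⟨⟨⟨e, he⟩⟩, _⟩ => ⟨e, he⟩, fun ⟨e, he⟩ => ⟨⟨⟨e, he⟩⟩, inferInstance⟩⟩

lemma A_nonneg (w v : Fin N) : 0 ≤ B.A w v := Nat.cast_nonneg _

lemma exists_A_ne_zero (v : Fin N) : ∃ w, B.A w v ≠ 0 := by
  obtain ⟨e, he⟩ := B.rng_surj v
  exact ⟨B.src e, B.A_ne_zero_iff.2 ⟨e, rfl, he⟩⟩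

lemma vtx_zero (x : B.Path) : B.vtx x 0 = B.rng0 x.1.1 := x.2.1.symm

lemma A_vtx_ne_zero (x : B.Path) (n : ℕ) : B.A (B.vtx x n) (B.vtx x (n + 1)) ≠ 0 :=
  B.A_ne_zero_iff.2 ⟨x.1.2 n, rfl, x.2.2 n⟩

lemma mAccess_vtx (x : B.Path) {n m : ℕ} (h : n ≤ m) : MAccess B.A (B.vtx x n) (B.vtx x m) := by
  induction m, h using Nat.le_induction with
  | base => exact .refl
  | succ m _ ih => exact ih.tail (B.A_vtx_ne_zero x m)

lemma tailEquiv_iff_eventually {x y : B.Path} :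
    B.TailEquiv x y ↔ ∀ᶠ n in atTop, x.1.2 n = y.1.2 n :=
  eventually_atTop.symm

lemma tailEquiv_equivalence : Equivalence B.TailEquiv where
  refl _ := B.tailEquiv_iff_eventually.2 (.of_forall fun _ => rfl)
  symm h := B.tailEquiv_iff_eventually.2 ((B.tailEquiv_iff_eventually.1 h).mono fun _ => Eq.symm)
  trans h₁ h₂ := B.tailEquiv_iff_eventually.2
    ((B.tailEquiv_iff_eventually.1 h₁).and (B.tailEquiv_iff_eventually.1 h₂) |>.mono
      fun _ h => h.1.trans h.2)

lemma TailEquiv.eventually_vtx_eq {B : StationaryBratteli N} {x y : B.Path}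
    (h : B.TailEquiv x y) : ∀ᶠ n in atTop, B.vtx x n = B.vtx y n :=
  (B.tailEquiv_iff_eventually.1 h).mono fun _ hn => congrArg B.src hn

lemma exists_path_append (w : B.Path) (m : ℕ) (r : ℕ → B.Edge)
    (hr : ∀ n, B.rng (r n) = B.src (r (n + 1))) (h : B.vtx w m = B.src (r 0)) :
    ∃ z ∈ B.cylinder w m, ∀ t, z.1.2 (m + t) = r t := by
  let g : ℕ → B.Edge := fun t => if t < m then w.1.2 t else r (t - m)
  have hg₀ : B.rng0 w.1.1 = B.src (g 0) := by
    rcases Nat.eq_zero_or_pos m with rfl | hm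
    · simpa [g, vtx_zero] using h
    · simpa [g, hm] using w.2.1
  have hg : ∀ t, B.rng (g t) = B.src (g (t + 1)) := by
    intro t
    rcases lt_trichotomy (t + 1) m with ht | rfl | ht
    · simpa [g, ht, (Nat.lt_succ_self t).trans ht] using w.2.2 t
    · simpa [g] using (w.2.2 t).trans h
    · have hmt : m ≤ t := Nat.lt_succ_iff.1 ht
      simpa [g, hmt.not_gt, ht.not_gt, Nat.sub_add_comm hmt] using hr (t - m)
  exact ⟨⟨(w.1.1, g), hg₀, hg⟩, ⟨rfl, fun t ht => if_pos ht⟩, fun t => by simp [g]⟩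

/-- A nonzero entry of `A ^ L` is a walk of length `L`, grafted between the first `m` edges of
`w` and the ray `r`. -/
lemma exists_path_splice (w : B.Path) (m : ℕ) :
    ∀ (L : ℕ) (r : ℕ → B.Edge), (∀ n, B.rng (r n) = B.src (r (n + 1))) →
      (B.A ^ L) (B.vtx w m) (B.src (r 0)) ≠ 0 →
      ∃ z ∈ B.cylinder w m, ∀ t, z.1.2 (m + L + t) = r t
  | 0, r, hr, h => by
    have hwr : B.vtx w m = B.src (r 0) := by
      by_contra hne
      exact h (Matrix.one_apply_ne hne)
    simpa using B.exists_path_append w m r hr hwr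
  | L + 1, r, hr, h => by
    rw [pow_succ] at h
    obtain ⟨c, hac, hcb⟩ := exists_ne_zero_of_mul_apply_ne_zero h
    obtain ⟨e, rfl, he⟩ := B.A_ne_zero_iff.1 hcb
    let r' : ℕ → B.Edge := fun | 0 => e | n + 1 => r n
    have hr' : ∀ n, B.rng (r' n) = B.src (r' (n + 1)) := by
      rintro (_ | n)
      exacts [he, hr n]
    obtain ⟨z, hz, hzr⟩ := exists_path_splice w m L r' hr' hac
    exact ⟨z, hz, fun t => by simpa [r', add_assoc, add_comm 1 t] using hzr (t + 1)⟩

lemma exists_path_splice_tailEquiv (w x : B.Path) (m L : ℕ)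
    (h : (B.A ^ L) (B.vtx w m) (B.vtx x (m + L)) ≠ 0) :
    ∃ z ∈ B.cylinder w m, B.TailEquiv z x := by
  obtain ⟨z, hz, hzx⟩ := B.exists_path_splice w m L (fun t => x.1.2 (m + L + t))
    (fun n => x.2.2 (m + L + n)) h
  refine ⟨z, hz, m + L, fun n hn => ?_⟩
  obtain ⟨t, rfl⟩ := Nat.exists_eq_add_of_le hn
  exact hzx t

lemma exists_cylinder_subset {o : Set B.Path} (ho : IsOpen o) {w : B.Path} (hw : w ∈ o) :
    ∃ n, B.cylinder w n ⊆ o := by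
  obtain ⟨V, hV, rfl⟩ := isOpen_induced_iff.1 ho
  obtain ⟨u, v, -, hv, hwu, hwv, huv⟩ := isOpen_prod_iff.1 hV w.1.1 w.1.2 hw
  obtain ⟨I, u', hI, hIv⟩ := isOpen_pi_iff.1 hv w.1.2 hwv
  refine ⟨I.sup (· + 1), fun z ⟨hz₀, hz⟩ => huv ⟨hz₀ ▸ hwu, hIv fun a ha => ?_⟩⟩
  rw [hz a (Nat.lt_of_succ_le (Finset.le_sup (f := (· + 1)) ha))]
  exact (hI a ha).2

end StationaryBratteli

namespace StationaryBratteli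

open Filter

variable {N : ℕ} (B : StationaryBratteli N)

/-- Some vertex is visited infinitely often, and from its first visit on the path stays in its
class. -/
lemma exists_eventually_vtx_mem_classOf (x : B.Path) :
    ∃ j, BlockNonzero B.A j ∧ ∀ᶠ n in atTop, B.vtx x n ∈ classOf B.A j := by
  obtain ⟨v, hv⟩ := Finite.exists_infinite_fiber (B.vtx x)
  have hv : Set.Infinite (B.vtx x ⁻¹' {v}) := Set.infinite_coe_iff.1 hv
  obtain ⟨n₀, rfl⟩ := hv.nonempty
  have hcl : ∀ n, n₀ ≤ n → B.vtx x n ∈ classOf B.A (B.vtx x n₀) := by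
    intro n hn
    obtain ⟨n', hn', hnn'⟩ := hv.exists_gt n
    exact ⟨B.mAccess_vtx x hn, hn' ▸ B.mAccess_vtx x hnn'.le⟩
  exact ⟨B.vtx x n₀, ⟨_, mem_classOf_self, _, hcl (n₀ + 1) n₀.le_succ, B.A_vtx_ne_zero x n₀⟩,
    eventually_atTop.2 ⟨n₀, hcl⟩⟩

lemma exists_path_forall_vtx_mem {S : Set (Fin N)} {a : Fin N} (ha : a ∈ S)
    (hS : ∀ v ∈ S, ∃ e, B.src e = v ∧ B.rng e ∈ S) : ∃ x : B.Path, ∀ n, B.vtx x n ∈ S := by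
  choose next hsrc hrng using hS
  let V : ℕ → S := fun n => Nat.rec ⟨a, ha⟩ (fun _ v => ⟨B.rng (next v.1 v.2), hrng v.1 v.2⟩) n
  let g : ℕ → B.Edge := fun n => next (V n).1 (V n).2
  obtain ⟨e₀, he₀⟩ := B.rng0_surj a
  refine ⟨⟨(e₀, g), he₀.trans (hsrc a ha).symm, fun n => (hsrc _ _).symm⟩, fun n => ?_⟩
  change B.src (g n) ∈ S
  rw [hsrc]
  exact (V n).2

lemma Ysub_nonempty {j : Fin N} (hj : BlockPrimitive B.A j) : (B.Ysub j).Nonempty := by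
  refine B.exists_path_forall_vtx_mem mem_classOf_self fun v hv => ?_
  obtain ⟨c, hc, hvc⟩ := hj.exists_succ_mem_classOf hv
  obtain ⟨e, he, rfl⟩ := B.A_ne_zero_iff.1 hvc
  exact ⟨e, he, hc⟩

lemma Xsat_nonempty {j : Fin N} (hj : BlockPrimitive B.A j) : (B.Xsat j).Nonempty :=
  let ⟨y, hy⟩ := B.Ysub_nonempty hj
  ⟨y, y, hy, B.tailEquiv_equivalence.refl y⟩

lemma Xsat_saturated (i : Fin N) : B.Saturated (B.Xsat i) :=
  fun _ ⟨y, hy, hyx⟩ _ hxz => ⟨y, hy, B.tailEquiv_equivalence.trans hyx hxz⟩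

lemma Xsat_congr {i j : Fin N} (h : MComm B.A i j) : B.Xsat i = B.Xsat j := by
  simp only [Xsat, Ysub, classOf_eq_of_mComm h]

lemma eventually_vtx_mem_classOf_of_mem_Xsat {i : Fin N} {x : B.Path} (hx : x ∈ B.Xsat i) :
    ∀ᶠ n in atTop, B.vtx x n ∈ classOf B.A i :=
  let ⟨_, hy, hyx⟩ := hx
  hyx.eventually_vtx_eq.mono fun n hn => hn ▸ hy n

lemma mem_Ysub_of_eventually {j : Fin N} {x : B.Path} (h₀ : B.vtx x 0 ∈ classOf B.A j)
    (h : ∀ᶠ n in atTop, B.vtx x n ∈ classOf B.A j) : x ∈ B.Ysub j := by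
  intro n
  obtain ⟨T, hnT, hT⟩ := ((eventually_ge_atTop n).and h).exists
  exact mem_classOf_of_mAccess h₀ hT (B.mAccess_vtx x n.zero_le) (B.mAccess_vtx x hnT)

lemma mem_Xsat_of_eventually {j : Fin N} (hj : BlockPrimitive B.A j) {x : B.Path}
    (hx : ∀ᶠ n in atTop, B.vtx x n ∈ classOf B.A j) : x ∈ B.Xsat j := by
  obtain ⟨u, hu⟩ := B.Ysub_nonempty hj
  obtain ⟨L, hL, hxL⟩ := ((hj.eventually_pow_pos B.A_nonneg).and hx).exists
  obtain ⟨z, ⟨hz₀, -⟩, hzx⟩ :=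
    B.exists_path_splice_tailEquiv u x 0 L (by simpa using (hL _ (hu 0) _ hxL).ne')
  refine ⟨z, B.mem_Ysub_of_eventually ?_ ((hzx.eventually_vtx_eq.and hx).mono
    fun n h => h.1 ▸ h.2), hzx⟩
  rw [vtx_zero, hz₀, ← vtx_zero]
  exact hu 0

lemma exists_mem_Xsat (hprim : ∀ j, BlockNonzero B.A j → BlockPrimitive B.A j) (x : B.Path) :
    ∃ j, BlockNonzero B.A j ∧ x ∈ B.Xsat j :=
  let ⟨j, hj, hx⟩ := B.exists_eventually_vtx_mem_classOf x
  ⟨j, hj, B.mem_Xsat_of_eventually (hprim j hj) hx⟩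

def accessSet (i : Fin N) : Set B.Path := {x | ∀ n, MAccess B.A (B.vtx x n) i}

lemma isClosed_accessSet (i : Fin N) : IsClosed (B.accessSet i) := by
  simp only [accessSet, Set.ofPred_forall]
  have hcont : ∀ n, Continuous fun x : B.Path => x.1.2 n := fun n =>
    (continuous_apply n).comp (continuous_snd.comp continuous_subtype_val)
  exact isClosed_iInter fun n =>
    (isClosed_discrete {e : B.Edge | MAccess B.A (B.src e) i}).preimage (hcont n)

lemma mem_accessSet_iff_eventually {i : Fin N} {x : B.Path} :
    x ∈ B.accessSet i ↔ ∀ᶠ n in atTop, MAccess B.A (B.vtx x n) i := by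
  refine ⟨Eventually.of_forall, fun h n => ?_⟩
  obtain ⟨T, hnT, hT⟩ := ((eventually_ge_atTop n).and h).exists
  exact (B.mAccess_vtx x hnT).trans hT

lemma accessSet_eq_iUnion (hprim : ∀ j, BlockNonzero B.A j → BlockPrimitive B.A j) (i : Fin N) :
    B.accessSet i = ⋃ j ∈ {j : Fin N | BlockNonzero B.A j ∧ MAccess B.A j i}, B.Xsat j := by
  ext x
  simp only [Set.mem_iUnion, Set.mem_ofPred_eq, exists_prop]
  constructor
  · intro hx
    obtain ⟨j, hj, hxj⟩ := B.exists_mem_Xsat hprim x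
    obtain ⟨n, hn⟩ := (B.eventually_vtx_mem_classOf_of_mem_Xsat hxj).exists
    exact ⟨j, ⟨hj, hn.1.trans (hx n)⟩, hxj⟩
  · rintro ⟨j, ⟨-, hji⟩, hxj⟩
    exact B.mem_accessSet_iff_eventually.2
      ((B.eventually_vtx_mem_classOf_of_mem_Xsat hxj).mono fun _ hn => hn.2.trans hji)

lemma Xsat_subset_closure (hprim : ∀ j, BlockNonzero B.A j → BlockPrimitive B.A j)
    {i j : Fin N} (hi : BlockNonzero B.A i) (hj : BlockNonzero B.A j) (hji : MAccess B.A j i)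
    {x : B.Path} (hx : x ∈ B.Xsat i) : B.Xsat j ⊆ closure {y | B.TailEquiv x y} := by
  intro w hw
  rw [mem_closure_iff]
  intro o ho hwo
  obtain ⟨n, hn⟩ := B.exists_cylinder_subset ho hwo
  obtain ⟨m, hnm, hwm⟩ :=
    ((eventually_ge_atTop n).and (B.eventually_vtx_mem_classOf_of_mem_Xsat hw)).exists
  obtain ⟨L, hL, hxL⟩ := (((hprim j hj).eventually_pow_pos_of_mAccess B.A_nonneg (hprim i hi)
    hji).and ((tendsto_atTop_mono (Nat.le_add_left · m) tendsto_id).eventually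
    (B.eventually_vtx_mem_classOf_of_mem_Xsat hx))).exists
  obtain ⟨z, hzw, hzx⟩ := B.exists_path_splice_tailEquiv w x m L (hL _ hwm _ hxL).ne'
  exact ⟨z, hn ⟨hzw.1, fun t ht => hzw.2 t (ht.trans_le hnm)⟩, B.tailEquiv_equivalence.symm hzx⟩

lemma closure_tailEquiv_eq_accessSet (hprim : ∀ j, BlockNonzero B.A j → BlockPrimitive B.A j)
    {i : Fin N} (hi : BlockNonzero B.A i) {x : B.Path} (hx : x ∈ B.Xsat i) :
    closure {y | B.TailEquiv x y} = B.accessSet i := by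
  refine (closure_minimal (fun y hy => ?_) (B.isClosed_accessSet i)).antisymm ?_
  · exact B.mem_accessSet_iff_eventually.2 ((hy.eventually_vtx_eq.and
      (B.eventually_vtx_mem_classOf_of_mem_Xsat hx)).mono fun _ h => h.1 ▸ h.2.2)
  · rw [B.accessSet_eq_iUnion hprim]
    exact Set.iUnion₂_subset fun j ⟨hj, hji⟩ => B.Xsat_subset_closure hprim hi hj hji hx

lemma Xsat_subset_of_isClosed_of_saturated
    (hprim : ∀ j, BlockNonzero B.A j → BlockPrimitive B.A j) {C : Set B.Path}
    (hC : IsClosed C) (hCs : B.Saturated C) {i j : Fin N} (hi : BlockNonzero B.A i)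
    (hj : BlockNonzero B.A j) (hji : MAccess B.A j i) {x : B.Path} (hxC : x ∈ C)
    (hx : x ∈ B.Xsat i) : B.Xsat j ⊆ C :=
  (B.Xsat_subset_closure hprim hi hj hji hx).trans (closure_minimal (hCs x hxC) hC)

lemma Xsat_eq_accessSet_of_initialClass (hprim : ∀ j, BlockNonzero B.A j → BlockPrimitive B.A j)
    {i : Fin N} (h : InitialClass B.A i) : B.Xsat i = B.accessSet i := by
  rw [B.accessSet_eq_iUnion hprim]
  refine (Set.subset_iUnion₂ (s := fun j _ => B.Xsat j) i
    ⟨h.blockNonzero B.exists_A_ne_zero, .refl⟩).antisymm ?_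
  exact Set.iUnion₂_subset fun j ⟨_, hji⟩ => (B.Xsat_congr (h j hji)).le

lemma isClosed_Xsat_of_initialClass (hprim : ∀ j, BlockNonzero B.A j → BlockPrimitive B.A j)
    {i : Fin N} (h : InitialClass B.A i) : IsClosed (B.Xsat i) :=
  B.Xsat_eq_accessSet_of_initialClass hprim h ▸ B.isClosed_accessSet i

end StationaryBratteli

theorem orbit_closures_and_minimal_components_general {N : ℕ} (B : StationaryBratteli N)
    (hI : CondI B.Fmat) :
    (∀ i : Fin N, BlockNonzero B.A i → ∀ x ∈ B.Xsat i,
      closure { y | B.TailEquiv x y } =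
        ⋃ j ∈ { j : Fin N | BlockNonzero B.A j ∧ MAccess B.A j i }, B.Xsat j) ∧
    (∀ C : Set B.Path,
      (C.Nonempty ∧ IsClosed C ∧ B.Saturated C ∧
        ∀ C' ⊆ C, C'.Nonempty → IsClosed C' → B.Saturated C' → C' = C) ↔
      ∃ i : Fin N, InitialClass B.A i ∧ C = B.Xsat i) := by
  have hprim : ∀ j, BlockNonzero B.A j → BlockPrimitive B.A j := fun _ =>
    hI.blockPrimitive_transpose
  have hΛ : ∀ {g}, InitialClass B.A g → BlockNonzero B.A g := (·.blockNonzero B.exists_A_ne_zero)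
  refine ⟨fun i hi x hx => by
    rw [B.closure_tailEquiv_eq_accessSet hprim hi hx, B.accessSet_eq_iUnion hprim],
    fun C => ⟨?_, ?_⟩⟩
  · rintro ⟨⟨x, hxC⟩, hC, hCs, hCmin⟩
    obtain ⟨j, hj, hxj⟩ := B.exists_mem_Xsat hprim x
    obtain ⟨g, hg, hgj⟩ := exists_initialClass_mAccess B.A j
    have hgC : B.Xsat g ⊆ C :=
      B.Xsat_subset_of_isClosed_of_saturated hprim hC hCs hj (hΛ hg) hgj hxC hxj
    exact ⟨g, hg, (hCmin _ hgC (B.Xsat_nonempty (hprim g (hΛ hg)))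
      (B.isClosed_Xsat_of_initialClass hprim hg) (B.Xsat_saturated g)).symm⟩
  · rintro ⟨i, hi, rfl⟩
    refine ⟨B.Xsat_nonempty (hprim i (hΛ hi)), B.isClosed_Xsat_of_initialClass hprim hi,
      B.Xsat_saturated i, fun C' hC' ⟨x, hx⟩ hC'c hC's => hC'.antisymm ?_⟩
    exact B.Xsat_subset_of_isClosed_of_saturated hprim hC'c hC's (hΛ hi) (hΛ hi) .refl hx (hC' hx)

/-- Under condition (I), the closure of the tail equivalence class of
any point of `X_α` is the union of the sets `X_β` over the classes `β ∈ Λ` having access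
to `α` in `R(A)`; consequently the minimal components of `X_B` are exactly the sets
`X_α` for `α` an initial class of `R(A)`. -/
theorem orbit_closures_and_minimal_components {N : ℕ} (B : StationaryBratteli N)
    (hap : B.Aperiodic) (hI : CondI B.Fmat) :
    (∀ i : Fin N, BlockNonzero B.A i → ∀ x ∈ B.Xsat i,
      closure { y | B.TailEquiv x y } =
        ⋃ j ∈ { j : Fin N | BlockNonzero B.A j ∧ MAccess B.A j i }, B.Xsat j) ∧
    (∀ C : Set B.Path,
      (C.Nonempty ∧ IsClosed C ∧ B.Saturated C ∧
        ∀ C' ⊆ C, C'.Nonempty → IsClosed C' → B.Saturated C' → C' = C) ↔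
      ∃ i : Fin N, InitialClass B.A i ∧ C = B.Xsat i) :=
  orbit_closures_and_minimal_components_general B hI
end

section
/- For n ≥ 1 let K_n = −11·5^n + 5·3^n + 61·25^n (so that K_n/55 is an integer). If θ is a real number such that θ·(K_n/55) ∈ ℤ for all sufficiently large n, then θ ∈ ℤ. -/
private lemma copr_two {K : ℤ} (h : K % 2 = 1) : IsCoprime K 2 :=
  ⟨1, -(K / 2), by have := Int.mul_ediv_add_emod K 2; linarith⟩

private lemma copr_three {K : ℤ} (h : K % 3 = 2) : IsCoprime K 3 :=
  ⟨-1, K / 3 + 1, by have := Int.mul_ediv_add_emod K 3; linarith⟩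

/-- Let `K_n = -11·5^n + 5·3^n + 61·25^n` (which is divisible by `55`
for every `n ≥ 1`).  If `θ` is a real number such that `θ·(K_n/55)` is an integer for
all sufficiently large `n`, then `θ` is an integer. -/
theorem integer_of_mul_K_div_55_integer (θ : ℝ)
    (h : ∃ n₀ : ℕ, ∀ n : ℕ, n₀ ≤ n → 1 ≤ n →
      ∃ m : ℤ, θ * (((-11 * 5 ^ n + 5 * 3 ^ n + 61 * 25 ^ n : ℤ) : ℝ) / 55) = (m : ℝ)) :
    ∃ m : ℤ, θ = (m : ℝ) := by
  obtain ⟨n₀, h⟩ := h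
  set n : ℕ := 2 * (n₀ + 1) with hn
  obtain ⟨m₀, h₀⟩ := h n (by omega) (by omega)
  obtain ⟨m₁, h₁⟩ := h (n + 1) (by omega) (by omega)
  obtain ⟨m₂, h₂⟩ := h (n + 2) (by omega) (by omega)
  -- clear the division by 55
  have hK0 : θ * ((-11 * 5 ^ n + 5 * 3 ^ n + 61 * 25 ^ n : ℤ) : ℝ) = 55 * m₀ := by
    linear_combination 55 * h₀
  have hK1 : θ * ((-11 * 5 ^ (n+1) + 5 * 3 ^ (n+1) + 61 * 25 ^ (n+1) : ℤ) : ℝ) = 55 * m₁ := by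
    linear_combination 55 * h₁
  have hK2 : θ * ((-11 * 5 ^ (n+2) + 5 * 3 ^ (n+2) + 61 * 25 ^ (n+2) : ℤ) : ℝ) = 55 * m₂ := by
    linear_combination 55 * h₂
  push_cast at hK0 hK1 hK2
  -- θ · 4·3^n is an integer
  have hM : θ * (4 * (3:ℝ) ^ n) = ((m₂ - 30 * m₁ + 125 * m₀ : ℤ) : ℝ) := by
    push_cast
    linear_combination (hK2 - 30 * hK1 + 125 * hK0) / 55
  -- K_n is coprime to 4·3^n
  have h2 : (-11 * 5 ^ n + 5 * 3 ^ n + 61 * 25 ^ n : ℤ) % 2 = 1 := by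
    have e5 : (5:ℤ) ^ n ≡ 1 [ZMOD 2] := by
      simpa using (show (5:ℤ) ≡ 1 [ZMOD 2] by decide).pow n
    have e3 : (3:ℤ) ^ n ≡ 1 [ZMOD 2] := by
      simpa using (show (3:ℤ) ≡ 1 [ZMOD 2] by decide).pow n
    have e25 : (25:ℤ) ^ n ≡ 1 [ZMOD 2] := by
      simpa using (show (25:ℤ) ≡ 1 [ZMOD 2] by decide).pow n
    have := ((e5.mul_left (-11)).add (e3.mul_left 5)).add (e25.mul_left 61)
    simpa [Int.ModEq] using this
  have h3 : (-11 * 5 ^ n + 5 * 3 ^ n + 61 * 25 ^ n : ℤ) % 3 = 2 := by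
    have e5 : (5:ℤ) ^ n ≡ 1 [ZMOD 3] := by
      have : (5:ℤ) ^ n = 25 ^ (n₀ + 1) := by rw [hn, pow_mul]; norm_num
      rw [this]
      simpa using (show (25:ℤ) ≡ 1 [ZMOD 3] by decide).pow (n₀ + 1)
    have e3 : (3:ℤ) ^ n ≡ 0 [ZMOD 3] :=
      (Int.modEq_zero_iff_dvd).mpr (dvd_pow_self 3 (by omega : n ≠ 0))
    have e25 : (25:ℤ) ^ n ≡ 1 [ZMOD 3] := by
      simpa using (show (25:ℤ) ≡ 1 [ZMOD 3] by decide).pow n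
    have := ((e5.mul_left (-11)).add (e3.mul_left 5)).add (e25.mul_left 61)
    simpa [Int.ModEq] using this
  have c : IsCoprime (-11 * 5 ^ n + 5 * 3 ^ n + 61 * 25 ^ n : ℤ) (4 * 3 ^ n) := by
    have := ((copr_two h2).pow_right (n := 2)).mul_right ((copr_three h3).pow_right (n := n))
    rwa [show ((2:ℤ)^2) = 4 from by norm_num] at this
  obtain ⟨u, v, huv⟩ := c
  refine ⟨u * (55 * m₀) + v * (m₂ - 30 * m₁ + 125 * m₀), ?_⟩
  have hR := congrArg (fun z : ℤ => (z : ℝ)) huv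
  push_cast at hR hM ⊢
  linear_combination (u : ℝ) * hK0 + (v : ℝ) * hM - θ * hR
end
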